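/- arXiv:1505.01804 — 3 statements merged into one kernel-verified Lean document; each statement's English description precedes it below -/
import Mathlib

section
/- Let φ(t) = t·L(t) be a Young function, where L:[0,∞)→[0,∞) is nondecreasing, locally Lipschitz on (0,∞), and satisfies t·L′(t) ≤ C for almost every t > 0, for some constant C ≥ 1. Then the complementary function ψ of φ satisfies ψ(L(t)) ≤ C·t for all t > 0; consequently L(t) ≤ ψ^{−1}(C·t) for all t > 0. -/
open MeasureTheory Set Filter
open scoped ENNReal NNReal BigOperators

noncomputable section

/-- `ℝ^d` with the Euclidean norm. -/
abbrev Euc (d : ℕ) := EuclideanSpace ℝ (Fin d)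

/-- An axis-parallel closed cube in `ℝ^d` with positive side length. -/
structure Cube (d : ℕ) where
  corner : Euc d
  side : ℝ
  side_pos : 0 < side

variable {d : ℕ}

/-- The underlying set of a cube. -/
def Cube.carrier (Q : Cube d) : Set (Euc d) :=
  {x | ∀ i, Q.corner i ≤ x i ∧ x i ≤ Q.corner i + Q.side}

/-- The average `⟨f⟩_Q = |Q|⁻¹ ∫_Q f` of a function over a cube. -/
def cubeAvg (f : Euc d → ℝ) (Q : Cube d) : ℝ :=
  (∫ x in Q.carrier, f x) / (volume Q.carrier).toReal

/-- `w(E) = ∫_E w dx` for a weight `w`. -/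
def wMeasure (w : Euc d → ℝ) (E : Set (Euc d)) : ℝ≥0∞ :=
  ∫⁻ x in E, ENNReal.ofReal (w x)

/-- A weight: a nonnegative locally integrable function. -/
def IsWeight (w : Euc d → ℝ) : Prop :=
  (∀ x, 0 ≤ w x) ∧ LocallyIntegrable w volume

/-- A sparse collection of cubes. -/
def IsSparse (𝒮 : Set (Cube d)) : Prop :=
  ∀ Q ∈ 𝒮,
    volume (⋃ Q' ∈ {Q' ∈ 𝒮 | Q'.carrier ⊂ Q.carrier}, Q'.carrier)
      ≤ volume Q.carrier / 8

/-- The sparse operator `T f = ∑_{Q ∈ 𝒮} ⟨f⟩_Q 1_Q`. -/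
def sparseOp (𝒮 : Set (Cube d)) (f : Euc d → ℝ) (x : Euc d) : ℝ≥0∞ :=
  ∑' Q : 𝒮, (Q : Cube d).carrier.indicator
    (fun _ => ENNReal.ofReal (cubeAvg f (Q : Cube d))) x

/-- The square `(Sf)² = ∑_{Q∈𝒮} ⟨f⟩_Q² 1_Q` of the sparse square function. -/
def sparseSqSq (𝒮 : Set (Cube d)) (f : Euc d → ℝ) (x : Euc d) : ℝ≥0∞ :=
  ∑' Q : 𝒮, (Q : Cube d).carrier.indicator
    (fun _ => ENNReal.ofReal ((cubeAvg f (Q : Cube d)) ^ 2)) x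

/-- The sparse square function. -/
def sparseSq (𝒮 : Set (Cube d)) (f : Euc d → ℝ) (x : Euc d) : ℝ≥0∞ :=
  (sparseSqSq 𝒮 f x) ^ (1/2 : ℝ)

/-- The Hardy–Littlewood maximal function over cubes. -/
def maximalFn (f : Euc d → ℝ) (x : Euc d) : ℝ≥0∞ :=
  ⨆ (Q : Cube d) (_ : x ∈ Q.carrier), ENNReal.ofReal (cubeAvg (fun y => |f y|) Q)

/-- A Young function: convex, increasing, vanishing at `0`, superlinear at `∞`. -/
def IsYoung (φ : ℝ → ℝ) : Prop :=
  ConvexOn ℝ (Ici 0) φ ∧ StrictMonoOn φ (Ici 0) ∧ φ 0 = 0 ∧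
    Tendsto (fun t => φ t / t) atTop atTop

/-- The complementary Young function `ψ(s) = sup_{t>0} (st - φ(t))`. -/
def youngConj (φ : ℝ → ℝ) (s : ℝ) : ℝ :=
  sSup {y | ∃ t > 0, y = s * t - φ t}

/-- Generalized (right-continuous) inverse of an increasing function. -/
def genInv (ψ : ℝ → ℝ) (y : ℝ) : ℝ :=
  sInf {s | 0 ≤ s ∧ y ≤ ψ s}

/-- The constant `c_φ = ∑_{k≥1} 1/ψ⁻¹(2^{2^k})`, as an extended real. -/
def cPhi (ψ : ℝ → ℝ) : ℝ≥0∞ :=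
  ∑' k : ℕ, ENNReal.ofReal (1 / genInv ψ ((2:ℝ) ^ (2 ^ (k + 1))))

/-- The Luxemburg norm `‖w‖_{φ(L),Q}`. -/
def orliczNorm (φ : ℝ → ℝ) (w : Euc d → ℝ) (Q : Cube d) : ℝ :=
  sInf {lam | 0 < lam ∧
    ∫⁻ x in Q.carrier, ENNReal.ofReal (φ (w x / lam)) ≤ volume Q.carrier}

/-- The Orlicz maximal function `M_{φ(L)} w (x) = sup_{Q ∋ x} ‖w‖_{φ(L),Q}`. -/
def orliczMaximal (φ : ℝ → ℝ) (w : Euc d → ℝ) (x : Euc d) : ℝ≥0∞ :=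
  ⨆ (Q : Cube d) (_ : x ∈ Q.carrier), ENNReal.ofReal (orliczNorm φ w Q)

/-- A Dini modulus of continuity. -/
def IsDini (ω : ℝ → ℝ) : Prop :=
  (∀ t ∈ Icc (0:ℝ) 1, ω t ∈ Icc (0:ℝ) 1) ∧ AntitoneOn ω (Icc (0:ℝ) 1) ∧
    (∫⁻ t in Ioc (0:ℝ) 1, ENNReal.ofReal (ω t / t)) < ⊤

/-- A Calderón–Zygmund kernel with modulus `ω`. -/
def IsCZKernel (d : ℕ) (ω : ℝ → ℝ) (K : Euc d → Euc d → ℝ) : Prop :=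
  (∀ x y, x ≠ y → |K x y| ≤ 1 / ‖x - y‖ ^ d) ∧
  (∀ x x' y, x ≠ y → 2 * ‖x - x'‖ ≤ ‖x - y‖ →
    |K x y - K x' y| ≤ ω (‖x - x'‖ / ‖x - y‖) / ‖x - y‖ ^ d) ∧
  (∀ x y y', x ≠ y → 2 * ‖y - y'‖ ≤ ‖x - y‖ →
    |K x y - K x y'| ≤ ω (‖y - y'‖ / ‖x - y‖) / ‖x - y‖ ^ d)

/-- A Calderón–Zygmund operator: an `L²`-bounded operator of norm at most one,
represented off the diagonal by a CZ kernel with modulus `ω`. -/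
structure CZOperator (d : ℕ) (ω : ℝ → ℝ) where
  K : Euc d → Euc d → ℝ
  kernel : IsCZKernel d ω K
  T : Lp ℝ 2 (volume : Measure (Euc d)) →L[ℝ] Lp ℝ 2 (volume : Measure (Euc d))
  norm_le : ‖T‖ ≤ 1
  repr : ∀ (f g : Euc d → ℝ) (hf : MemLp f 2 (volume : Measure (Euc d))),
    Measurable f → Measurable g →
    (∃ M, ∀ x, |f x| ≤ M) → (∃ M, ∀ x, |g x| ≤ M) →
    HasCompactSupport f → HasCompactSupport g →
    Disjoint (Function.support f) (Function.support g) →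
    ∫ x, (T (hf.toLp f)) x * g x = ∫ x, (∫ y, K x y * f y) * g x

/-- The maximal truncation `T^* f`. -/
def maxTrunc (K : Euc d → Euc d → ℝ) (f : Euc d → ℝ) (x : Euc d) : ℝ≥0∞ :=
  ⨆ (δ : ℝ) (_ : 0 < δ), ENNReal.ofReal |∫ y in {y | δ < ‖x - y‖}, K x y * f y|

/-- Average of an `ℝ≥0∞`-valued function over a cube. -/
def cubeAvgE (g : Euc d → ℝ≥0∞) (Q : Cube d) : ℝ≥0∞ :=
  (∫⁻ x in Q.carrier, g x) / volume Q.carrier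

/-- The `A₁` constant `[w]_{A₁} = ess sup M w / w`. -/
def A1Const (d : ℕ) (w : Euc d → ℝ) : ℝ≥0∞ :=
  essSup (fun x => maximalFn w x / ENNReal.ofReal (w x)) volume

/-- The `A_p` constant (`[w]_{A₁}` when `p = 1`). -/
def ApConst (d : ℕ) (p : ℝ) (w : Euc d → ℝ) : ℝ≥0∞ :=
  if p = 1 then A1Const d w
  else ⨆ Q : Cube d,
    cubeAvgE (fun x => ENNReal.ofReal (w x)) Q *
      (cubeAvgE (fun x => ENNReal.ofReal (w x) ^ (-(1 / (p - 1)))) Q) ^ (p - 1)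

/-- The Fujii–Wilson `A_∞` constant. -/
def AinfConst (d : ℕ) (w : Euc d → ℝ) : ℝ≥0∞ :=
  ⨆ Q : Cube d,
    (∫⁻ x in Q.carrier, maximalFn (Q.carrier.indicator w) x) / wMeasure w Q.carrier

/-- Weak `L^p(w)` quasinorm of an `ℝ≥0∞`-valued function. -/
def weakLpNorm (w : Euc d → ℝ) (p : ℝ) (g : Euc d → ℝ≥0∞) : ℝ≥0∞ :=
  ⨆ (lam : ℝ) (_ : 0 < lam),
    ENNReal.ofReal lam * (wMeasure w {x | ENNReal.ofReal lam < g x}) ^ (1 / p)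

/-- `L^p(w)` norm of a real function. -/
def LpNormW (w : Euc d → ℝ) (p : ℝ) (f : Euc d → ℝ) : ℝ≥0∞ :=
  (∫⁻ x, ENNReal.ofReal (|f x| ^ p) * ENNReal.ofReal (w x)) ^ (1 / p)

/-- `L^p(w)` norm of an `ℝ≥0∞`-valued function. -/
def LpNormWE (w : Euc d → ℝ) (p : ℝ) (g : Euc d → ℝ≥0∞) : ℝ≥0∞ :=
  (∫⁻ x, (g x) ^ p * ENNReal.ofReal (w x)) ^ (1 / p)

/-- `log₊ x = max (log x) 0`. -/
def logp (x : ℝ) : ℝ := max (Real.log x) 0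

/-- `log₁ x = 1 + log₊ x`. -/
def log1 (x : ℝ) : ℝ := 1 + logp x

/-- `log₂ x = log₁ (log₁ x)`. -/
def log2f (x : ℝ) : ℝ := log1 (log1 x)

/-- `log₃ x = log₁ (log₂ x)`. -/
def log3f (x : ℝ) : ℝ := log1 (log2f x)

/-- `M_r w = (M (w^r))^{1/r}`. -/
def MrMaximal (r : ℝ) (w : Euc d → ℝ) (x : Euc d) : ℝ≥0∞ :=
  (maximalFn (fun y => w y ^ r) x) ^ (1 / r)

/-- The maximal cubes (w.r.t. inclusion) of a family of cubes. -/
def maximalCubes (A : Set (Cube d)) : Set (Cube d) :=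
  {Q ∈ A | ∀ Q' ∈ A, ¬ Q.carrier ⊂ Q'.carrier}

/-- What remains of `𝒮` after removing the first `v` layers. -/
def sparseResidual (𝒮 : Set (Cube d)) : ℕ → Set (Cube d)
  | 0 => 𝒮
  | v + 1 => sparseResidual 𝒮 v \ maximalCubes (sparseResidual 𝒮 v)

/-- The `v`-th sparseLayer of the collection `𝒮`. -/
def sparseLayer (𝒮 : Set (Cube d)) (v : ℕ) : Set (Cube d) := maximalCubes (sparseResidual 𝒮 v)

/-- The family `C_α` of test functions for the intrinsic square function. -/
def holderFamily (n : ℕ) (α : ℝ) : Set (Euc n → ℝ) :=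
  {γ | Function.support γ ⊆ Metric.closedBall 0 1 ∧ (∫ x, γ x) = 0 ∧
    ∀ x y, |γ x - γ y| ≤ ‖x - y‖ ^ α}

/-- `A_α f (y,t) = sup_{γ ∈ C_α} |f ∗ γ_t (y)|`. -/
def intrinsicA (n : ℕ) (α : ℝ) (f : Euc n → ℝ) (y : Euc n) (t : ℝ) : ℝ≥0∞ :=
  ⨆ γ ∈ holderFamily n α,
    ENNReal.ofReal |∫ z, f z * (t ^ (-(n:ℝ)) * γ (t⁻¹ • (y - z)))|

/-- The intrinsic square function `G_α f`. -/
def intrinsicG (n : ℕ) (α : ℝ) (f : Euc n → ℝ) (x : Euc n) : ℝ≥0∞ :=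
  (∫⁻ p in {p : Euc n × ℝ | 0 < p.2 ∧ ‖p.1 - x‖ < p.2},
      (intrinsicA n α f p.1 p.2) ^ 2 / ENNReal.ofReal (p.2 ^ (n + 1))) ^ (1/2 : ℝ)

/-! Being locally Lipschitz, `L` is absolutely continuous on compact subintervals of `(0, ∞)`,
so integrating `L' ≤ C / t` gives `L t - L u ≤ C log (t / u)` for `0 < u ≤ t`. For `s ≤ L t`
every term `s u - u L u` of the supremum defining `ψ s` is then at most
`u (L t - L u) ≤ C u log (t / u) ≤ C t / e` when `u < t`, and at most `0` when `u ≥ t` by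
monotonicity. Thus `ψ s ≤ C t / e < C t` for all `s ≤ L t`, which gives both claims. -/

namespace IsYoung

variable {φ : ℝ → ℝ}

lemma nonneg (hφ : IsYoung φ) {t : ℝ} (ht : 0 ≤ t) : 0 ≤ φ t :=
  hφ.2.2.1 ▸ hφ.2.1.monotoneOn self_mem_Ici ht ht

lemma bddAbove_conj_set (hφ : IsYoung φ) (s : ℝ) :
    BddAbove {y | ∃ t > 0, y = s * t - φ t} := by
  obtain ⟨U, hU⟩ := eventually_atTop.1 (hφ.2.2.2.eventually_ge_atTop s)
  refine ⟨|s| * max U 1, ?_⟩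
  rintro _ ⟨t, ht, rfl⟩
  have hφt := hφ.nonneg ht.le
  rcases le_or_gt t (max U 1) with htU | htU
  · nlinarith [le_abs_self s, abs_nonneg s]
  · have hst : s ≤ φ t / t := hU t ((le_max_left U 1).trans htU.le)
    rw [le_div_iff₀ ht] at hst
    nlinarith [mul_nonneg (abs_nonneg s) (zero_le_one.trans (le_max_right U 1))]

lemma mul_sub_le_youngConj (hφ : IsYoung φ) (s : ℝ) {t : ℝ} (ht : 0 < t) :
    s * t - φ t ≤ youngConj φ s :=
  le_csSup (hφ.bddAbove_conj_set s) ⟨t, ht, rfl⟩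

lemma exists_le_youngConj (hφ : IsYoung φ) (y : ℝ) : ∃ s, 0 ≤ s ∧ y ≤ youngConj φ s := by
  refine ⟨max (y + φ 1) 0, le_max_right _ _, ?_⟩
  have h := hφ.mul_sub_le_youngConj (max (y + φ 1) 0) one_pos
  linarith [le_max_left (y + φ 1) 0]

end IsYoung

lemma youngConj_le {φ : ℝ → ℝ} {s M : ℝ} (h : ∀ t > 0, s * t - φ t ≤ M) : youngConj φ s ≤ M :=
  csSup_le ⟨_, 1, one_pos, rfl⟩ fun _ ⟨t, ht, hy⟩ => hy ▸ h t ht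

lemma le_genInv {ψ : ℝ → ℝ} {a y : ℝ} (hne : ∃ s, 0 ≤ s ∧ y ≤ ψ s) (h : ∀ s < a, ψ s < y) :
    a ≤ genInv ψ y :=
  le_csInf hne fun s hs => not_lt.1 fun hsa => (h s hsa).not_ge hs.2

lemma LipschitzOnWith.sub_le_integral_of_ae_deriv_le {f g : ℝ → ℝ} {K : ℝ≥0} {a b : ℝ}
    (hab : a ≤ b) (hf : LipschitzOnWith K f (Icc a b)) (hg : IntervalIntegrable g volume a b)
    (h : ∀ᵐ x ∂volume.restrict (Icc a b), deriv f x ≤ g x) :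
    f b - f a ≤ ∫ x in a..b, g x := by
  have hac : AbsolutelyContinuousOnInterval f a b :=
    LipschitzOnWith.absolutelyContinuousOnInterval (by rwa [uIcc_of_le hab])
  rw [← hac.integral_deriv_eq_sub]
  exact intervalIntegral.integral_mono_ae_restrict hab hac.intervalIntegrable_deriv hg h

lemma Real.mul_log_div_le {t u : ℝ} (ht : 0 < t) (hu : 0 < u) :
    u * Real.log (t / u) ≤ t / Real.exp 1 := by
  have h := Real.exp_one_mul_le_exp (x := Real.log (t / u))
  rw [Real.exp_log (by positivity)] at h
  rw [le_div_iff₀ (Real.exp_pos 1)]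
  calc u * Real.log (t / u) * Real.exp 1 = u * (Real.exp 1 * Real.log (t / u)) := by ring
    _ ≤ u * (t / u) := by gcongr
    _ = t := by field_simp

lemma sub_le_mul_log_div {L : ℝ → ℝ} {C : ℝ} (hlip : LocallyLipschitzOn (Ioi 0) L)
    (hderiv : ∀ᵐ t ∂volume.restrict (Ioi 0), t * deriv L t ≤ C) {s t : ℝ} (hs : 0 < s)
    (hst : s ≤ t) : L t - L s ≤ C * Real.log (t / s) := by
  have hIcc : Icc s t ⊆ Ioi 0 := fun x hx => hs.trans_le hx.1
  obtain ⟨K, hK⟩ := (hlip.mono hIcc).exists_lipschitzOnWith_of_compact isCompact_Icc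
  have hinv : IntervalIntegrable (fun x => C * x⁻¹) volume s t := by
    refine (intervalIntegral.intervalIntegrable_inv (fun x hx => ?_) continuousOn_id).const_mul C
    rw [uIcc_of_le hst] at hx
    exact (hIcc hx).ne'
  have hbound : ∀ᵐ x ∂volume.restrict (Icc s t), deriv L x ≤ C * x⁻¹ := by
    filter_upwards [ae_restrict_of_ae_restrict_of_subset hIcc hderiv,
      ae_restrict_mem measurableSet_Icc] with x hx hxI
    rwa [← div_eq_mul_inv, le_div_iff₀ (hIcc hxI), mul_comm]
  calc L t - L s ≤ ∫ x in s..t, C * x⁻¹ := hK.sub_le_integral_of_ae_deriv_le hst hinv hbound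
    _ = C * Real.log (t / s) := by
      rw [intervalIntegral.integral_const_mul, integral_inv_of_pos hs (hs.trans_le hst)]

lemma youngConj_le_of_sub_le_mul_log {L : ℝ → ℝ} {C s t : ℝ} (hC : 0 ≤ C)
    (hmono : MonotoneOn L (Ici 0)) (hlog : ∀ u, 0 < u → u ≤ t → L t - L u ≤ C * Real.log (t / u))
    (ht : 0 < t) (hs : s ≤ L t) : youngConj (fun u => u * L u) s ≤ C * t / Real.exp 1 := by
  refine youngConj_le fun u hu => ?_
  rcases le_or_gt t u with htu | hut
  · have hLu : s ≤ L u := hs.trans (hmono ht.le (ht.le.trans htu) htu)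
    have : 0 ≤ C * t / Real.exp 1 := by positivity
    nlinarith
  · calc s * u - u * L u ≤ u * (L t - L u) := by nlinarith
      _ ≤ u * (C * Real.log (t / u)) := by gcongr; exact hlog u hu hut.le
      _ = C * (u * Real.log (t / u)) := by ring
      _ ≤ C * (t / Real.exp 1) := by gcongr; exact Real.mul_log_div_le ht hu
      _ = C * t / Real.exp 1 := by ring

theorem conj_of_slowly_varying_general (L : ℝ → ℝ) (C : ℝ) (hC : 1 ≤ C)
    (hmono : MonotoneOn L (Ici 0))
    (hlip : ∀ t ∈ Ioi (0:ℝ), ∃ ε > 0, ∃ K : ℝ≥0,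
      LipschitzOnWith K L (Ioi 0 ∩ Metric.ball t ε))
    (hderiv : ∀ᵐ t ∂(volume.restrict (Ioi (0:ℝ))), t * deriv L t ≤ C)
    (hyoung : IsYoung (fun t => t * L t))
    (ψ : ℝ → ℝ) (hψ : ψ = youngConj (fun t => t * L t)) :
    (∀ t > 0, ψ (L t) ≤ C * t) ∧ ∀ t > 0, L t ≤ genInv ψ (C * t) := by
  have hC0 : 0 < C := zero_lt_one.trans_le hC
  have hloc : LocallyLipschitzOn (Ioi 0) L := fun t ht => by
    obtain ⟨ε, hε, K, hK⟩ := hlip t ht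
    exact ⟨K, _, inter_mem_nhdsWithin _ (Metric.ball_mem_nhds t hε), hK⟩
  have hψ_le : ∀ t > 0, ∀ s ≤ L t, ψ s ≤ C * t / Real.exp 1 := fun t ht s hs =>
    hψ ▸ youngConj_le_of_sub_le_mul_log hC0.le hmono
      (fun _ hu hut => sub_le_mul_log_div hloc hderiv hu hut) ht hs
  have he : 1 < Real.exp 1 := Real.one_lt_exp_iff.2 one_pos
  refine ⟨fun t ht => (hψ_le t ht _ le_rfl).trans (div_le_self (by positivity) he.le),
    fun t ht => le_genInv (hψ ▸ hyoung.exists_le_youngConj _) fun s hs => ?_⟩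
  exact (hψ_le t ht s hs.le).trans_lt (div_lt_self (by positivity) he)

/-- If `φ(t) = t L(t)` with `t L'(t) ≤ C` a.e., then `ψ(L(t)) ≤ C t`,
hence `L(t) ≤ ψ⁻¹(C t)`. -/
theorem conj_of_slowly_varying (L : ℝ → ℝ) (C : ℝ) (hC : 1 ≤ C)
    (hL0 : ∀ t, 0 ≤ t → 0 ≤ L t) (hmono : MonotoneOn L (Ici 0))
    (hlip : ∀ t ∈ Ioi (0:ℝ), ∃ ε > 0, ∃ K : ℝ≥0,
      LipschitzOnWith K L (Ioi 0 ∩ Metric.ball t ε))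
    (hderiv : ∀ᵐ t ∂(volume.restrict (Ioi (0:ℝ))), t * deriv L t ≤ C)
    (hyoung : IsYoung (fun t => t * L t))
    (ψ : ℝ → ℝ) (hψ : ψ = youngConj (fun t => t * L t)) :
    (∀ t > 0, ψ (L t) ≤ C * t) ∧ ∀ t > 0, L t ≤ genInv ψ (C * t) :=
  conj_of_slowly_varying_general L C hC hmono hlip hderiv hyoung ψ hψ

end
end

section
/- Let 1 < r < ∞, r′ = r/(r−1), let φ(t) = t^r, and let ψ be the complementary Young function of φ. Then there is an absolute constant C such that Σ_{k=1}^∞ 1/ψ^{−1}(2^{2^k}) ≤ C·(1 + log r′). -/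
/-!
Young's inequality `s t ≤ s^{r'}/r' + t^r/r` gives `ψ(s) ≤ s^{r'}`, hence `ψ⁻¹(y) ≥ y^{1/r'}` and the
`k`-th term of `c_φ` is at most `2^{-2^k/r'}`. Once `2^K ≥ r'` the terms beyond the `K`-th decay like
`2^{-j}`, so the first `K` terms (each at most `1`) dominate and `c_φ ≤ K + 2`; with `K ≈ log₂ r'`
this is `≤ 3 (1 + log r')`.
-/

open MeasureTheory Set Filter
open scoped ENNReal NNReal BigOperators

noncomputable section

variable {d : ℕ}

open Real

lemma youngConj_rpow_le {p q : ℝ} (hpq : p.HolderConjugate q) {s : ℝ} (hs : 0 ≤ s) :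
    youngConj (fun t => t ^ p) s ≤ s ^ q := by
  refine Real.sSup_le ?_ (rpow_nonneg hs q)
  rintro _ ⟨t, ht, rfl⟩
  have hyoung := young_inequality_of_nonneg hs ht.le hpq.symm
  have hsq : s ^ q / q ≤ s ^ q := div_le_self (rpow_nonneg hs q) hpq.symm.lt.le
  have htp : t ^ p / p ≤ t ^ p := div_le_self (rpow_nonneg ht.le p) hpq.lt.le
  linarith

/-- If no `s` reaches `y`, then `genInv ψ y = sInf ∅ = 0` and the left side is the junk value
`1 / 0 = 0`. -/
lemma one_div_genInv_le_rpow {ψ : ℝ → ℝ} {q y : ℝ} (hq : 0 < q)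
    (hψ : ∀ s, 0 ≤ s → ψ s ≤ s ^ q) (hy : 0 < y) :
    1 / genInv ψ y ≤ y ^ (-q⁻¹) := by
  rcases ({s | 0 ≤ s ∧ y ≤ ψ s} : Set ℝ).eq_empty_or_nonempty with hS | hS
  · simp only [genInv, hS, Real.sInf_empty, div_zero]
    positivity
  · have hlow : y ^ q⁻¹ ≤ genInv ψ y := by
      refine le_csInf hS ?_
      rintro s ⟨hs, hys⟩
      exact (rpow_inv_le_iff_of_pos hy.le hs hq).2 (hys.trans (hψ s hs))
    rw [rpow_neg hy.le, ← one_div]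
    exact one_div_le_one_div_of_le (by positivity) hlow

lemma tsum_ofReal_two_rpow_neg_le {a : ℝ} {K : ℕ} (hK : 1 ≤ 2 ^ K * a) :
    ∑' k : ℕ, ENNReal.ofReal ((2 : ℝ) ^ (-(2 ^ (k + 1) * a))) ≤ K + 2 := by
  set f : ℕ → ℝ≥0∞ := fun k => ENNReal.ofReal ((2 : ℝ) ^ (-(2 ^ (k + 1) * a)))
  have ha : 0 < a := pos_of_mul_pos_right (one_pos.trans_le hK) (by positivity)
  have hhead : ∀ k, f k ≤ 1 := fun k =>
    ENNReal.ofReal_le_one.2 <| rpow_le_one_of_one_le_of_nonpos one_le_two <|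
      neg_nonpos.2 (mul_nonneg (by positivity) ha.le)
  have htail : ∀ j, f (j + K) ≤ ENNReal.ofReal ((1 / 2 : ℝ) ^ j) := by
    intro j
    refine ENNReal.ofReal_le_ofReal ?_
    have hj : (j : ℝ) ≤ 2 ^ (j + K + 1) * a := calc
      (j : ℝ) ≤ 2 ^ (j + 1) := by
        have := Nat.lt_two_pow_self (n := j + 1)
        exact_mod_cast (Nat.le_succ j).trans this.le
      _ ≤ 2 ^ (j + 1) * (2 ^ K * a) := le_mul_of_one_le_right (by positivity) hK
      _ = 2 ^ (j + K + 1) * a := by ring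
    calc (2 : ℝ) ^ (-(2 ^ (j + K + 1) * a)) ≤ 2 ^ (-(j : ℝ)) :=
          rpow_le_rpow_of_exponent_le one_le_two (neg_le_neg hj)
      _ = (1 / 2 : ℝ) ^ j := by rw [rpow_neg zero_le_two, rpow_natCast, one_div, inv_pow]
  calc ∑' k, f k = ∑ k ∈ Finset.range K, f k + ∑' j, f (j + K) :=
        ENNReal.summable.sum_add_tsum_nat_add'.symm
    _ ≤ ∑ _k ∈ Finset.range K, 1 + ∑' j : ℕ, ENNReal.ofReal ((1 / 2 : ℝ) ^ j) :=
        add_le_add (Finset.sum_le_sum fun k _ => hhead k) (ENNReal.tsum_le_tsum htail)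
    _ = K + 2 := by
        rw [← ENNReal.ofReal_tsum_of_nonneg (fun j => by positivity)
          (summable_geometric_of_lt_one (by norm_num) (by norm_num)), tsum_geometric_two]
        simp

lemma cPhi_le_of_le_rpow {ψ : ℝ → ℝ} {q : ℝ} (hq : 0 < q)
    (hψ : ∀ s, 0 ≤ s → ψ s ≤ s ^ q) {K : ℕ} (hK : q ≤ 2 ^ K) :
    cPhi ψ ≤ K + 2 := by
  refine le_trans (ENNReal.tsum_le_tsum fun k => ?_)
    (tsum_ofReal_two_rpow_neg_le (a := q⁻¹) ((le_mul_inv_iff₀ hq).2 (by simpa using hK)))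
  refine ENNReal.ofReal_le_ofReal ((one_div_genInv_le_rpow hq hψ (by positivity)).trans_eq ?_)
  rw [← rpow_natCast, ← rpow_mul zero_le_two]
  push_cast
  ring_nf

/-- `2 log x` overestimates `log₂ x` because `log 2 > 1/2`. -/
lemma le_two_pow_natCeil_two_mul_log (x : ℝ) : x ≤ 2 ^ ⌈2 * log x⌉₊ := by
  refine pow_le_of_le_log two_pos ?_
  have hlog2 : 1 / 2 < log 2 := by linarith [log_two_gt_d9]
  nlinarith [Nat.le_ceil (2 * log x), Nat.zero_le ⌈2 * log x⌉₊]

/-- For `φ(t) = t^r`, the constant `c_φ` is at most a multiple of `1 + log r'`. -/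
theorem cPhi_power :
    ∃ C : ℝ, 0 < C ∧
      ∀ r : ℝ, 1 < r →
      ∀ ψ : ℝ → ℝ, ψ = youngConj (fun t => t ^ r) →
        cPhi ψ ≤ ENNReal.ofReal (C * (1 + Real.log (r / (r - 1)))) := by
  refine ⟨3, three_pos, fun r hr ψ hψ => ?_⟩
  subst hψ
  have hconj : r.HolderConjugate (r / (r - 1)) := .conjExponent hr
  have hq : 1 ≤ r / (r - 1) := hconj.symm.lt.le
  refine (cPhi_le_of_le_rpow hconj.symm.pos (fun s hs => youngConj_rpow_le hconj hs)
    (le_two_pow_natCeil_two_mul_log _)).trans ?_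
  have hlog := log_nonneg hq
  have hceil := Nat.ceil_lt_add_one (by positivity : 0 ≤ 2 * log (r / (r - 1)))
  rw [← ENNReal.ofReal_natCast, ← ENNReal.ofReal_ofNat 2,
    ← ENNReal.ofReal_add (by positivity) zero_le_two]
  exact ENNReal.ofReal_le_ofReal (by linarith)

end
end

section
/- Let 1 < α < 2, let φ(t) = t·(log₂ t)^α (where log₂ t = 1+log₊(1+log₊ t)), and let ψ be the complementary Young function of φ. Then there is an absolute constant C such that Σ_{k=1}^∞ 1/ψ^{−1}(2^{2^k}) ≤ C/(α−1). -/
open MeasureTheory Set Filter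
open scoped ENNReal NNReal BigOperators

noncomputable section

variable {d : ℕ}

/-!
Splitting according to whether `log₂ t` exceeds `s^{1/α}` gives `ψ(s) ≤ s·exp(exp(s^{1/α}))`.
Hence `ψ⁻¹(2^{2^n}) ≥ ((n-2) log 2)^α ≳ n^α` for `n ≥ 4` (and `ψ⁻¹(2^{2^n}) ≥ 1/8` always), so the
`n`-th term of `c_φ` is `O(n^{-α})`, and `∑ n^{-α} ≤ α/(α-1)` by comparison with `∫₁^∞ x^{-α} dx`.
-/

open Real

lemma one_le_log1 (x : ℝ) : 1 ≤ log1 x := by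
  unfold log1 logp; linarith [le_max_right (log x) 0]

lemma log_le_log1 (x : ℝ) : log x ≤ log1 x := by
  unfold log1 logp; linarith [le_max_left (log x) 0]

lemma log2f_one : log2f 1 = 1 := by simp [log2f, log1, logp]

lemma le_log2f_of_exp_exp_lt {u t : ℝ} (h : exp (exp u) < t) : u ≤ log2f t := by
  have ht : 0 < t := (exp_pos _).trans h
  have hexp : exp u < log1 t := ((lt_log_iff_exp_lt ht).2 h).trans_le (log_le_log1 t)
  calc u ≤ log (log1 t) := ((lt_log_iff_exp_lt ((exp_pos u).trans hexp)).2 hexp).le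
    _ ≤ log2f t := log_le_log1 _

section LogLogYoung

variable {α : ℝ}

lemma mul_sub_mul_log2f_rpow_le (hα : 0 < α) {s t : ℝ} (hs : 0 ≤ s) (ht : 0 < t) :
    s * t - t * log2f t ^ α ≤ s * exp (exp (s ^ α⁻¹)) := by
  have hφ : 0 ≤ t * log2f t ^ α :=
    mul_nonneg ht.le (rpow_nonneg (zero_le_one.trans (one_le_log1 _)) _)
  rcases le_or_gt t (exp (exp (s ^ α⁻¹))) with hle | hlt
  · nlinarith [mul_le_mul_of_nonneg_left hle hs]
  · have hs_le : s ≤ log2f t ^ α :=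
      calc s = (s ^ α⁻¹) ^ α := (rpow_inv_rpow hs hα.ne').symm
        _ ≤ log2f t ^ α := by gcongr; exact le_log2f_of_exp_exp_lt hlt
    have : 0 ≤ s * exp (exp (s ^ α⁻¹)) := by positivity
    nlinarith [mul_le_mul_of_nonneg_left hs_le ht.le]

lemma youngConj_loglog_le (hα : 0 < α) {s : ℝ} (hs : 0 ≤ s) :
    youngConj (fun t => t * log2f t ^ α) s ≤ s * exp (exp (s ^ α⁻¹)) :=
  Real.sSup_le (by rintro _ ⟨t, ht, rfl⟩; exact mul_sub_mul_log2f_rpow_le hα hs ht)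
    (by positivity)

lemma sub_one_le_youngConj_loglog (hα : 0 < α) {s : ℝ} (hs : 0 ≤ s) :
    s - 1 ≤ youngConj (fun t => t * log2f t ^ α) s :=
  le_csSup ⟨_, by rintro _ ⟨t, ht, rfl⟩; exact mul_sub_mul_log2f_rpow_le hα hs ht⟩
    ⟨1, one_pos, by simp [log2f_one]⟩

lemma le_genInv_youngConj_loglog (hα : 0 < α) {B Y : ℝ} (hB : 0 ≤ B)
    (hBY : B * exp (exp (B ^ α⁻¹)) ≤ Y) :
    B ≤ genInv (youngConj (fun t => t * log2f t ^ α)) Y := by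
  have hY : 0 ≤ Y := le_trans (by positivity) hBY
  have hne := sub_one_le_youngConj_loglog hα (by linarith : 0 ≤ Y + 1)
  refine le_csInf ⟨Y + 1, by linarith, by linarith⟩ ?_
  rintro s ⟨hs, hYs⟩
  by_contra! hsB
  have : s * exp (exp (s ^ α⁻¹)) < B * exp (exp (B ^ α⁻¹)) :=
    calc s * exp (exp (s ^ α⁻¹)) ≤ s * exp (exp (B ^ α⁻¹)) := by gcongr
      _ < B * exp (exp (B ^ α⁻¹)) := by gcongr
  linarith [youngConj_loglog_le hα hs]

lemma rpow_mul_exp_exp_le_two_pow_two_pow (hα0 : 0 ≤ α) (hα2 : α ≤ 2) (m : ℕ) :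
    (m * log 2) ^ α * exp (exp (m * log 2)) ≤ 2 ^ 2 ^ (m + 2) := by
  have hlog2 := log_two_gt_d9
  have hx : 0 ≤ (m : ℝ) * log 2 := by positivity
  have hm : (m : ℝ) ≤ 2 ^ m := by exact_mod_cast Nat.lt_two_pow_self.le
  have hpow : (m * log 2) ^ α ≤ exp (2 * (m * log 2)) :=
    calc (m * log 2) ^ α ≤ exp (m * log 2) ^ α := by
          gcongr; linarith [add_one_le_exp ((m : ℝ) * log 2)]
      _ = exp (α * (m * log 2)) := by rw [← exp_mul, mul_comm]
      _ ≤ exp (2 * (m * log 2)) := by gcongr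
  rw [exp_nat_mul, exp_log two_pos]
  calc (m * log 2) ^ α * exp (2 ^ m) ≤ exp (2 * (m * log 2)) * exp (2 ^ m) := by gcongr
    _ = exp (2 * (m * log 2) + 2 ^ m) := (exp_add _ _).symm
    _ ≤ exp ((2 ^ (m + 2) : ℕ) * log 2) := by
        gcongr; push_cast; rw [pow_add]; nlinarith
    _ = 2 ^ 2 ^ (m + 2) := by rw [exp_nat_mul, exp_log two_pos]

lemma exp_exp_one_lt_twenty_seven : exp (exp 1) < 27 :=
  calc exp (exp 1) < exp 3 := exp_lt_exp.2 exp_one_lt_three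
    _ = exp 1 ^ 3 := by rw [← exp_nat_mul]; norm_num
    _ < 3 ^ 3 := by gcongr; exact exp_one_lt_three
    _ = 27 := by norm_num

lemma inv_eight_le_genInv_youngConj_loglog (hα : 0 < α) {Y : ℝ} (hY : 4 ≤ Y) :
    1 / 8 ≤ genInv (youngConj (fun t => t * log2f t ^ α)) Y := by
  refine le_genInv_youngConj_loglog hα (by norm_num) ?_
  have hE : exp (exp ((1 / 8 : ℝ) ^ α⁻¹)) ≤ exp (exp 1) := by
    gcongr; exact rpow_le_one (by norm_num) (by norm_num) (by positivity)
  linarith [exp_exp_one_lt_twenty_seven]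

lemma rpow_le_genInv_youngConj_loglog_two_pow_two_pow (hα : 0 < α) (hα2 : α ≤ 2) (m : ℕ) :
    (m * log 2) ^ α ≤ genInv (youngConj (fun t => t * log2f t ^ α)) (2 ^ 2 ^ (m + 2)) := by
  refine le_genInv_youngConj_loglog hα (by positivity) ?_
  rw [rpow_rpow_inv (by positivity) hα.ne']
  exact rpow_mul_exp_exp_le_two_pow_two_pow hα.le hα2 m

lemma one_div_genInv_youngConj_loglog_le (hα : 0 < α) (hα2 : α ≤ 2) {n : ℕ} (hn : 0 < n) :
    1 / genInv (youngConj (fun t => t * log2f t ^ α)) (2 ^ 2 ^ n) ≤ 72 * (n : ℝ) ^ (-α) := by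
  have hn1 : (1 : ℝ) ≤ n := by exact_mod_cast hn
  rw [rpow_neg (by positivity), ← div_eq_mul_inv]
  rcases le_or_gt n 3 with hn3 | hn3
  · have h4 : (4 : ℝ) ≤ 2 ^ 2 ^ n :=
      calc (4 : ℝ) = 2 ^ 2 ^ 1 := by norm_num
        _ ≤ 2 ^ 2 ^ n := by gcongr <;> norm_num; omega
    have hnα : (n : ℝ) ^ α ≤ 9 :=
      calc (n : ℝ) ^ α ≤ (n : ℝ) ^ (2 : ℝ) := rpow_le_rpow_of_exponent_le hn1 hα2
        _ ≤ 3 ^ (2 : ℝ) := by gcongr; exact_mod_cast hn3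
        _ = 9 := by norm_num
    calc 1 / genInv _ _ ≤ 1 / (1 / 8) :=
          one_div_le_one_div_of_le (by norm_num) (inv_eight_le_genInv_youngConj_loglog hα h4)
      _ ≤ 72 / (n : ℝ) ^ α := by rw [le_div_iff₀ (by positivity)]; linarith
  · obtain ⟨m, rfl⟩ : ∃ m, n = m + 2 := ⟨n - 2, by omega⟩
    have hm : (2 : ℝ) ≤ m := by exact_mod_cast (by omega : 2 ≤ m)
    have hlog2 := log_two_gt_d9
    have hlow : (((m + 2 : ℕ) : ℝ) / 4) ^ α ≤ (m * log 2) ^ α := by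
      gcongr; push_cast; nlinarith
    have h4α : (4 : ℝ) ^ α ≤ 16 :=
      calc (4 : ℝ) ^ α ≤ 4 ^ (2 : ℝ) := rpow_le_rpow_of_exponent_le (by norm_num) hα2
        _ = 16 := by norm_num
    calc 1 / genInv _ _ ≤ 1 / (((m + 2 : ℕ) : ℝ) / 4) ^ α :=
          one_div_le_one_div_of_le (by positivity)
            (hlow.trans (rpow_le_genInv_youngConj_loglog_two_pow_two_pow hα hα2 m))
      _ = 4 ^ α / ((m + 2 : ℕ) : ℝ) ^ α := by
          rw [div_rpow (by positivity) (by norm_num), one_div_div]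
      _ ≤ 72 / ((m + 2 : ℕ) : ℝ) ^ α := by gcongr; linarith

end LogLogYoung

lemma summable_nat_add_one_rpow_neg {p : ℝ} (hp : 1 < p) :
    Summable fun n : ℕ => ((n : ℝ) + 1) ^ (-p) := by
  simpa using (summable_nat_add_iff 1).2 (Real.summable_nat_rpow.2 (neg_lt_neg hp))

lemma tsum_nat_add_one_rpow_neg_le {p : ℝ} (hp : 1 < p) :
    ∑' n : ℕ, ((n : ℝ) + 1) ^ (-p) ≤ p / (p - 1) := by
  have htail : ∑' n : ℕ, ((n : ℝ) + 1 + 1) ^ (-p) ≤ 1 / (p - 1) := by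
    have := AntitoneOn.tsum_comp_add_le_integral (f := fun x : ℝ => x ^ (-p)) 1
      ((antitoneOn_rpow_Ioi_of_exponent_nonpos (by linarith)).mono
        (Ici_subset_Ioi.2 (by norm_num)))
      (by exact_mod_cast integrableOn_Ioi_rpow_of_lt (by linarith) one_pos)
      (fun t ht => rpow_nonneg (zero_le_one.trans (le_of_lt (by simpa using ht))) _)
    push_cast at this
    rw [integral_Ioi_rpow_of_lt (by linarith) one_pos, one_rpow] at this
    convert this using 1
    rw [neg_div, ← div_neg, neg_add', neg_neg]
  rw [(summable_nat_add_one_rpow_neg hp).tsum_eq_zero_add]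
  push_cast
  rw [zero_add, one_rpow]
  have hp1 : p - 1 ≠ 0 := by linarith
  calc 1 + ∑' n : ℕ, ((n : ℝ) + 1 + 1) ^ (-p) ≤ 1 + 1 / (p - 1) := by linarith
    _ = p / (p - 1) := by field_simp; ring

/-- For `φ(t) = t (log₂ t)^α`, the constant `c_φ` is at most a multiple of `1/(α-1)`. -/
theorem cPhi_loglog :
    ∃ C : ℝ, 0 < C ∧
      ∀ α : ℝ, 1 < α → α < 2 →
      ∀ ψ : ℝ → ℝ, ψ = youngConj (fun t => t * (log2f t) ^ α) →
        cPhi ψ ≤ ENNReal.ofReal (C / (α - 1)) := by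
  refine ⟨144, by norm_num, fun α hα1 hα2 ψ hψ => ?_⟩
  subst hψ
  have hterm (k : ℕ) : 1 / genInv (youngConj (fun t => t * log2f t ^ α)) (2 ^ 2 ^ (k + 1))
      ≤ 72 * ((k : ℝ) + 1) ^ (-α) := by
    exact_mod_cast one_div_genInv_youngConj_loglog_le (by linarith) hα2.le k.succ_pos
  calc cPhi _ ≤ ∑' k : ℕ, ENNReal.ofReal (72 * ((k : ℝ) + 1) ^ (-α)) :=
        ENNReal.tsum_le_tsum fun k => ENNReal.ofReal_le_ofReal (hterm k)
    _ = ENNReal.ofReal (72 * ∑' k : ℕ, ((k : ℝ) + 1) ^ (-α)) := by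
        rw [← tsum_mul_left, ENNReal.ofReal_tsum_of_nonneg (fun k => by positivity)
          ((summable_nat_add_one_rpow_neg hα1).mul_left 72)]
    _ ≤ ENNReal.ofReal (144 / (α - 1)) := by
        refine ENNReal.ofReal_le_ofReal ?_
        calc 72 * ∑' k : ℕ, ((k : ℝ) + 1) ^ (-α) ≤ 72 * (α / (α - 1)) := by
              gcongr; exact tsum_nat_add_one_rpow_neg_le hα1
          _ ≤ 144 / (α - 1) := by
              rw [mul_div_assoc', div_le_div_iff_of_pos_right (by linarith)]; linarith

end
end
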